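/- arXiv:2211.11353 — 4 statements merged into one kernel-verified Lean document; each statement's English description precedes it below -/
import Mathlib

section
/- Let N, K, M be positive integers with N ≤ K, let ħ be a nonzero real number, let ν be a nonzero complex number, and let a_1,…,a_M ∈ ℂ and nonzero p_1,…,p_M, q_1,…,q_M ∈ ℂ be parameters such that p_i ≠ q_j and q_i ≠ p_j for all i ≠ j. For (s,t) ∈ ℝ × ℝ^K define the exponential factors e_i(s,t) = exp(ħ⁻¹((Log p_i − Log q_i)·s + Σ_{k=1}^K (p_i^k − q_i^k)·t_k)), the interaction coefficients c_{ij} = ((p_i−p_j)(q_i−q_j))/((p_i−q_j)(q_i−p_j)), and the M-soliton tau function τ(s,t) = Σ_{I ⊆ {1,…,M}} (Π_{i∈I} a_i)·(Π_{i<j, i,j∈I} c_{ij})·Π_{i∈I} e_i(s,t). If for every i = 1,…,M the parameters satisfy p_i^N − ν·Log p_i = q_i^N − ν·Log q_i, then τ satisfies the reduction condition ∂τ/∂t_N(s,t) − ν·∂τ/∂s(s,t) = 0 for all (s,t) ∈ ℝ × ℝ^K. -/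
/-!
Each term of the tau function is `A_I · exp (ħ⁻¹ Σ_{i ∈ I} φ_i)` with phases `φ_i` affine in `s`
(slope `Log p_i − Log q_i`) and in `t_N` (slope `p_i^N − q_i^N`). Hence both derivatives multiply
the `I`-th term by the corresponding sum of slopes, and the reduction condition says exactly that
the `t_N`-slopes are `ν` times the `s`-slopes.
-/

open Complex Finset

theorem hasDerivAt_sum_mul_prod_exp {ι : Type*} [Fintype ι] (A : Finset ι → ℂ)
    {φ : ι → ℝ → ℂ} {φ' : ι → ℂ} {x : ℝ} (hφ : ∀ i, HasDerivAt (φ i) (φ' i) x) :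
    HasDerivAt (fun y => ∑ I : Finset ι, A I * ∏ i ∈ I, exp (φ i y))
      (∑ I : Finset ι, A I * (∑ i ∈ I, φ' i) * ∏ i ∈ I, exp (φ i x)) x := by
  simp only [← exp_sum]
  refine HasDerivAt.fun_sum fun I _ => ?_
  have := ((HasDerivAt.fun_sum fun i (_ : i ∈ I) => hφ i).cexp).const_mul (A I)
  simpa only [mul_assoc, mul_comm (exp _)] using this

theorem hasDerivAt_sum_mul_update {K : Type*} [Fintype K] [DecidableEq K] (w : K → ℂ)
    (t : K → ℝ) (n : K) (x : ℝ) :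
    HasDerivAt (fun y : ℝ => ∑ k, w k * ((Function.update t n y k : ℝ) : ℂ)) (w n) x := by
  refine (HasDerivAt.fun_sum fun k (_ : k ∈ univ) =>
    ((hasDerivAt_pi.1 (hasDerivAt_update t n x) k).ofReal_comp).const_mul (w k)).congr_deriv ?_
  simp [Pi.single_apply, apply_ite]

/-- The M-soliton tau function of the lattice KP hierarchy
(with time variables truncated to `t_1, …, t_K`) satisfies the reduction
condition `∂τ/∂t_N − ν·∂τ/∂s = 0` of the N-th generalized ILW hierarchy,
provided the soliton parameters satisfy `p_i^N − ν·Log p_i = q_i^N − ν·Log q_i`. -/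
theorem stmt_1 (N K M : ℕ) (hN : 0 < N) (hNK : N ≤ K)
    (hbar : ℝ) (ν : ℂ)
    (a p q : Fin M → ℂ)
    (e : Fin M → ℝ → (Fin K → ℝ) → ℂ)
    (he : ∀ i s t, e i s t = Complex.exp ((hbar : ℂ)⁻¹ *
      ((Complex.log (p i) - Complex.log (q i)) * (s : ℂ) +
        ∑ k : Fin K, (p i ^ (k.val + 1) - q i ^ (k.val + 1)) * (t k : ℂ))))
    (c : Fin M → Fin M → ℂ)
    (τ : ℝ → (Fin K → ℝ) → ℂ)
    (hτ : ∀ s t, τ s t = ∑ I : Finset (Fin M),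
      (∏ i ∈ I, a i) * (∏ i ∈ I, ∏ j ∈ I, if i < j then c i j else 1) *
        ∏ i ∈ I, e i s t)
    (hred : ∀ i, p i ^ N - ν * Complex.log (p i)
              = q i ^ N - ν * Complex.log (q i)) :
    ∀ (s : ℝ) (t : Fin K → ℝ),
      deriv (fun x : ℝ => τ s (Function.update t ⟨N - 1, by omega⟩ x))
          (t ⟨N - 1, by omega⟩)
        - ν * deriv (fun x : ℝ => τ x t) s = 0 := by
  intro s t
  set n : Fin K := ⟨N - 1, by omega⟩
  have hn : (n : ℕ) + 1 = N := Nat.sub_add_cancel hN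
  set phase : Fin M → ℝ → (Fin K → ℝ) → ℂ := fun i s t => (hbar : ℂ)⁻¹ *
    ((log (p i) - log (q i)) * (s : ℂ) +
      ∑ k : Fin K, (p i ^ (k.val + 1) - q i ^ (k.val + 1)) * (t k : ℂ))
  set A : Finset (Fin M) → ℂ := fun I =>
    (∏ i ∈ I, a i) * ∏ i ∈ I, ∏ j ∈ I, if i < j then c i j else 1
  have hτ_exp : ∀ s t, τ s t = ∑ I, A I * ∏ i ∈ I, exp (phase i s t) := fun s t => by
    simp only [hτ, he, phase, A]
  have h_s := hasDerivAt_sum_mul_prod_exp A (φ := fun i x => phase i x t) (x := s) fun i =>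
    (((hasDerivAt_id s).ofReal_comp.const_mul _).add_const _).const_mul (hbar : ℂ)⁻¹
  have h_t := hasDerivAt_sum_mul_prod_exp A
    (φ := fun i x => phase i s (Function.update t n x)) (x := t n) fun i =>
    ((hasDerivAt_sum_mul_update (fun k : Fin K => p i ^ (k.val + 1) - q i ^ (k.val + 1))
      t n (t n)).const_add _).const_mul (hbar : ℂ)⁻¹
  simp only [← hτ_exp, Function.update_eq_self, hn, ofReal_one, mul_one] at h_s h_t
  rw [h_t.deriv, h_s.deriv, mul_sum, sub_eq_zero]
  refine sum_congr rfl fun I _ => ?_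
  have h_slopes : ∑ i ∈ I, (hbar : ℂ)⁻¹ * (p i ^ N - q i ^ N)
      = ν * ∑ i ∈ I, (hbar : ℂ)⁻¹ * (log (p i) - log (q i)) := by
    rw [mul_sum]
    exact sum_congr rfl fun i _ => by linear_combination (hbar : ℂ)⁻¹ * hred i
  rw [h_slopes]
  ring
end

section
/- Let N, K, K′ be positive integers, ħ a nonzero real number, and let p, q : ℝ → ℂ be continuous at 0, nonvanishing on a neighborhood of 0, with p(0), q(0) not on the closed negative real axis, and satisfying p(ν)^N − ν·Log p(ν) = q(ν)^N − ν·Log q(ν) for all ν in a neighborhood of 0. Fix a real number s, real numbers T_k for those k ∈ {1,…,K} with k not divisible by N, and real numbers X_1,…,X_{K′}. For ν ≠ 0 define e(ν) = exp(ħ⁻¹((Log p(ν) − Log q(ν))·s + Σ′_k (p(ν)^k − q(ν)^k)·T_k + Σ_{k=1}^{K′} (p(ν)^{kN} − q(ν)^{kN})·X_k/ν)), where Σ′_k runs over k ∈ {1,…,K} not divisible by N. Then as ν → 0 (ν ≠ 0), e(ν) converges to E = exp(ħ⁻¹((Log p(0) − Log q(0))·s + Σ′_k (p(0)^k − q(0)^k)·T_k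 + Σ_{k=1}^{K′} k·(p(0)^{(k−1)N}·Log p(0) − q(0)^{(k−1)N}·Log q(0))·X_k)). -/
/-!
On the reduced curve `p^N - ν log p = q^N - ν log q` one has `p^N - q^N = ν (log p - log q)`,
so `(p^{(m+1)N} - q^{(m+1)N}) / ν` is a geometric sum in `p^N, q^N` times `log p - log q`. As
`ν → 0` the geometric sum tends to `(m+1) p(0)^{mN}`, because `p(0)^N = q(0)^N`; every other
part of the exponent is continuous at `0`.
-/

open Filter Topology Finset

theorem tendsto_pow_succ_sub_pow_succ_div {α 𝕜 : Type*} [Field 𝕜] [TopologicalSpace 𝕜]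
    [IsTopologicalRing 𝕜] {l : Filter α} {u v c d : α → 𝕜} {a d₀ : 𝕜}
    (hu : Tendsto u l (𝓝 a)) (hv : Tendsto v l (𝓝 a)) (hd : Tendsto d l (𝓝 d₀))
    (hc : ∀ᶠ x in l, c x ≠ 0) (huv : ∀ᶠ x in l, u x - v x = c x * d x) (n : ℕ) :
    Tendsto (fun x => (u x ^ (n + 1) - v x ^ (n + 1)) / c x) l
      (𝓝 ((n + 1) * a ^ n * d₀)) := by
  have hfactor : (fun x => (∑ i ∈ range (n + 1), u x ^ i * v x ^ (n + 1 - 1 - i)) * d x)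
      =ᶠ[l] fun x => (u x ^ (n + 1) - v x ^ (n + 1)) / c x := by
    filter_upwards [hc, huv] with x hcx hx
    rw [← geom_sum₂_mul, hx]
    field_simp
  have hsum : Tendsto (fun x => (∑ i ∈ range (n + 1), u x ^ i * v x ^ (n + 1 - 1 - i)) * d x)
      l (𝓝 ((∑ i ∈ range (n + 1), a ^ i * a ^ (n + 1 - 1 - i)) * d₀)) :=
    (tendsto_finsetSum _ fun i _ => (hu.pow i).mul (hv.pow _)).mul hd
  rw [geom_sum₂_self] at hsum
  push_cast at hsum
  simpa only [Nat.add_sub_cancel] using hsum.congr' hfactor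

theorem tendsto_pow_sub_pow_div_of_reduction {N : ℕ} {p q : ℝ → ℂ}
    (hp : ContinuousAt p 0) (hq : ContinuousAt q 0)
    (hp0 : p 0 ∈ Complex.slitPlane) (hq0 : q 0 ∈ Complex.slitPlane)
    (hred : ∀ᶠ ν in 𝓝 (0 : ℝ), p ν ^ N - (ν : ℂ) * Complex.log (p ν)
        = q ν ^ N - (ν : ℂ) * Complex.log (q ν)) (m : ℕ) :
    Tendsto (fun ν : ℝ => (p ν ^ ((m + 1) * N) - q ν ^ ((m + 1) * N)) / (ν : ℂ)) (𝓝[≠] 0)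
      (𝓝 ((m + 1) * (p 0 ^ (m * N) * Complex.log (p 0)
        - q 0 ^ (m * N) * Complex.log (q 0)))) := by
  have hpow : p 0 ^ N = q 0 ^ N := by simpa using hred.self_of_nhds
  have hnonzero : ∀ᶠ ν : ℝ in 𝓝[≠] 0, (ν : ℂ) ≠ 0 :=
    eventually_mem_nhdsWithin.mono fun _ hν => Complex.ofReal_ne_zero.mpr hν
  have hdiff : ∀ᶠ ν in 𝓝[≠] (0 : ℝ),
      p ν ^ N - q ν ^ N = (ν : ℂ) * (Complex.log (p ν) - Complex.log (q ν)) :=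
    (hred.filter_mono nhdsWithin_le_nhds).mono fun ν h => by linear_combination h
  have hp' : Tendsto (fun ν => p ν ^ N) (𝓝[≠] 0) (𝓝 (p 0 ^ N)) :=
    (hp.pow N).tendsto.mono_left nhdsWithin_le_nhds
  have hq' : Tendsto (fun ν => q ν ^ N) (𝓝[≠] 0) (𝓝 (p 0 ^ N)) :=
    hpow ▸ (hq.pow N).tendsto.mono_left nhdsWithin_le_nhds
  have hlog : Tendsto (fun ν : ℝ => Complex.log (p ν) - Complex.log (q ν)) (𝓝[≠] 0)
      (𝓝 (Complex.log (p 0) - Complex.log (q 0))) :=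
    ((hp.tendsto.clog hp0).sub (hq.tendsto.clog hq0)).mono_left nhdsWithin_le_nhds
  have key := tendsto_pow_succ_sub_pow_succ_div hp' hq' hlog hnonzero hdiff m
  simp only [← pow_mul'] at key
  convert key using 2
  rw [pow_mul', pow_mul' (q 0), ← hpow]
  ring

theorem stmt_4_general (N K K' : ℕ)
    (hbar : ℝ)
    (p q : ℝ → ℂ) (hp : ContinuousAt p 0) (hq : ContinuousAt q 0)
    (hp0 : p 0 ∈ Complex.slitPlane) (hq0 : q 0 ∈ Complex.slitPlane)
    (hred : ∀ᶠ ν in nhds (0 : ℝ), p ν ≠ 0 ∧ q ν ≠ 0 ∧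
      p ν ^ N - (ν : ℂ) * Complex.log (p ν)
        = q ν ^ N - (ν : ℂ) * Complex.log (q ν))
    (s : ℝ) (T : Fin K → ℝ) (X : Fin K' → ℝ) :
    Tendsto
      (fun ν : ℝ => Complex.exp ((hbar : ℂ)⁻¹ *
        ((Complex.log (p ν) - Complex.log (q ν)) * (s : ℂ) +
         (∑ k : Fin K, if ¬ (N ∣ (k.val + 1)) then
            (p ν ^ (k.val + 1) - q ν ^ (k.val + 1)) * (T k : ℂ) else 0) +
         ∑ k : Fin K',
           (p ν ^ ((k.val + 1) * N) - q ν ^ ((k.val + 1) * N)) * (X k : ℂ) / (ν : ℂ))))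
      (nhdsWithin (0 : ℝ) {0}ᶜ)
      (nhds (Complex.exp ((hbar : ℂ)⁻¹ *
        ((Complex.log (p 0) - Complex.log (q 0)) * (s : ℂ) +
         (∑ k : Fin K, if ¬ (N ∣ (k.val + 1)) then
            (p 0 ^ (k.val + 1) - q 0 ^ (k.val + 1)) * (T k : ℂ) else 0) +
         ∑ k : Fin K', ((k.val : ℂ) + 1) *
           (p 0 ^ (k.val * N) * Complex.log (p 0)
             - q 0 ^ (k.val * N) * Complex.log (q 0)) * (X k : ℂ))))) := by
  have hregular : Tendsto (fun ν : ℝ =>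
      (Complex.log (p ν) - Complex.log (q ν)) * (s : ℂ) +
        ∑ k : Fin K, if ¬ (N ∣ (k.val + 1)) then
          (p ν ^ (k.val + 1) - q ν ^ (k.val + 1)) * (T k : ℂ) else 0) (𝓝 0)
      (𝓝 ((Complex.log (p 0) - Complex.log (q 0)) * (s : ℂ) +
        ∑ k : Fin K, if ¬ (N ∣ (k.val + 1)) then
          (p 0 ^ (k.val + 1) - q 0 ^ (k.val + 1)) * (T k : ℂ) else 0)) := by
    refine (((hp.tendsto.clog hp0).sub (hq.tendsto.clog hq0)).mul_const _).add
      (tendsto_finsetSum _ fun k _ => ?_)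
    split_ifs
    · exact tendsto_const_nhds
    · exact ((hp.pow _).sub (hq.pow _)).tendsto.mul_const _
  have hflows := tendsto_finsetSum (univ : Finset (Fin K')) fun k _ =>
    (tendsto_pow_sub_pow_div_of_reduction hp hq hp0 hq0 (hred.mono fun _ h => h.2.2)
      k.val).mul_const (X k : ℂ)
  simp only [div_mul_eq_mul_div] at hflows
  exact (Complex.continuous_exp.tendsto _).comp
    (((hregular.mono_left nhdsWithin_le_nhds).add hflows).const_mul _)

/-- Scaling limit `ν → 0` of the exponential factor of a soliton
solution of the generalized ILW hierarchy (with `t_k = T_k` for `N ∤ k` and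
`t_{kN} = X_k/ν`): it converges to the exponential factor of a soliton of the
extended lattice GD hierarchy. -/
theorem stmt_4 (N K K' : ℕ) (hN : 0 < N) (hK : 0 < K) (hK' : 0 < K')
    (hbar : ℝ) (hhbar : hbar ≠ 0)
    (p q : ℝ → ℂ) (hp : ContinuousAt p 0) (hq : ContinuousAt q 0)
    (hp0 : p 0 ∈ Complex.slitPlane) (hq0 : q 0 ∈ Complex.slitPlane)
    (hred : ∀ᶠ ν in nhds (0 : ℝ), p ν ≠ 0 ∧ q ν ≠ 0 ∧
      p ν ^ N - (ν : ℂ) * Complex.log (p ν)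
        = q ν ^ N - (ν : ℂ) * Complex.log (q ν))
    (s : ℝ) (T : Fin K → ℝ) (X : Fin K' → ℝ) :
    Tendsto
      (fun ν : ℝ => Complex.exp ((hbar : ℂ)⁻¹ *
        ((Complex.log (p ν) - Complex.log (q ν)) * (s : ℂ) +
         (∑ k : Fin K, if ¬ (N ∣ (k.val + 1)) then
            (p ν ^ (k.val + 1) - q ν ^ (k.val + 1)) * (T k : ℂ) else 0) +
         ∑ k : Fin K',
           (p ν ^ ((k.val + 1) * N) - q ν ^ ((k.val + 1) * N)) * (X k : ℂ) / (ν : ℂ))))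
      (nhdsWithin (0 : ℝ) {0}ᶜ)
      (nhds (Complex.exp ((hbar : ℂ)⁻¹ *
        ((Complex.log (p 0) - Complex.log (q 0)) * (s : ℂ) +
         (∑ k : Fin K, if ¬ (N ∣ (k.val + 1)) then
            (p 0 ^ (k.val + 1) - q 0 ^ (k.val + 1)) * (T k : ℂ) else 0) +
         ∑ k : Fin K', ((k.val : ℂ) + 1) *
           (p 0 ^ (k.val * N) * Complex.log (p 0)
             - q 0 ^ (k.val * N) * Complex.log (q 0)) * (X k : ℂ))))) :=
  stmt_4_general N K K' hbar p q hp hq hp0 hq0 hred s T X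
end

section
/- Let N, K, K′, M be positive integers, ħ a nonzero real number, a_1,…,a_M ∈ ℂ, and let p_i, q_i : ℝ → ℂ (i = 1,…,M) be continuous at 0, nonvanishing on a neighborhood of 0, with p_i(0), q_i(0) not on the closed negative real axis, with p_i(0) ≠ q_j(0) and q_i(0) ≠ p_j(0) for all i ≠ j, and satisfying p_i(ν)^N − ν·Log p_i(ν) = q_i(ν)^N − ν·Log q_i(ν) for all ν in a neighborhood of 0. Fix real s, real T_k for k ∈ {1,…,K} not divisible by N, and real X_1,…,X_{K′}. For ν ≠ 0 sufficiently small define e_i(ν) = exp(ħ⁻¹((Log p_i(ν) − Log q_i(ν))·s + Σ′_k (p_i(ν)^k − q_i(ν)^k)·T_k + Σ_{k=1}^{K′}(p_i(ν)^{kN} − q_i(ν)^{kN})·X_k/ν)), c_{ij}(ν) = ((p_i(ν)−p_j(ν))(q_i(ν)−q_j(ν)))/((p_i(ν)−q_j(ν))(q_i(ν)−p_j(ν))), and τ(ν) = Σ_{I ⊆ {1,…,M}} (Π_{i∈I} a_i)·(Π_{i<j, i,j∈I} c_{ij}(ν))·Π_{i∈I} e_i(ν). Then as ν → 0 (ν ≠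 0), τ(ν) converges to 𝒯 = Σ_{I ⊆ {1,…,M}} (Π_{i∈I} a_i)·(Π_{i<j, i,j∈I} C_{ij})·Π_{i∈I} E_i, where C_{ij} = ((p_i(0)−p_j(0))(q_i(0)−q_j(0)))/((p_i(0)−q_j(0))(q_i(0)−p_j(0))) and E_i = exp(ħ⁻¹((Log p_i(0) − Log q_i(0))·s + Σ′_k (p_i(0)^k − q_i(0)^k)·T_k + Σ_{k=1}^{K′} k·(p_i(0)^{(k−1)N}·Log p_i(0) − q_i(0)^{(k−1)N}·Log q_i(0))·X_k)). -/
open Filter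

/-- In the scaling limit `ν → 0` (with `t_k = T_k` for `N ∤ k`
and `t_{kN} = X_k/ν`), the M-soliton tau function of the generalized ILW
hierarchy converges to the M-soliton tau function of the extended lattice GD
hierarchy. -/
theorem stmt_5 (N K K' M : ℕ) (hN : 0 < N) (hK : 0 < K) (hK' : 0 < K')
    (hM : 0 < M) (hbar : ℝ) (hhbar : hbar ≠ 0)
    (a : Fin M → ℂ) (p q : Fin M → ℝ → ℂ)
    (hp : ∀ i, ContinuousAt (p i) 0) (hq : ∀ i, ContinuousAt (q i) 0)
    (hp0 : ∀ i, p i 0 ∈ Complex.slitPlane) (hq0 : ∀ i, q i 0 ∈ Complex.slitPlane)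
    (hpq0 : ∀ i j, i ≠ j → p i 0 ≠ q j 0) (hqp0 : ∀ i j, i ≠ j → q i 0 ≠ p j 0)
    (hred : ∀ i, ∀ᶠ ν in nhds (0 : ℝ), p i ν ≠ 0 ∧ q i ν ≠ 0 ∧
      p i ν ^ N - (ν : ℂ) * Complex.log (p i ν)
        = q i ν ^ N - (ν : ℂ) * Complex.log (q i ν))
    (s : ℝ) (T : Fin K → ℝ) (X : Fin K' → ℝ)
    (e : Fin M → ℝ → ℂ)
    (he : ∀ i ν, e i ν = Complex.exp ((hbar : ℂ)⁻¹ *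
      ((Complex.log (p i ν) - Complex.log (q i ν)) * (s : ℂ) +
       (∑ k : Fin K, if ¬ (N ∣ (k.val + 1)) then
          (p i ν ^ (k.val + 1) - q i ν ^ (k.val + 1)) * (T k : ℂ) else 0) +
       ∑ k : Fin K',
         (p i ν ^ ((k.val + 1) * N) - q i ν ^ ((k.val + 1) * N)) * (X k : ℂ)
           / (ν : ℂ))))
    (c : Fin M → Fin M → ℝ → ℂ)
    (hc : ∀ i j ν, c i j ν =
      ((p i ν - p j ν) * (q i ν - q j ν)) / ((p i ν - q j ν) * (q i ν - p j ν)))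
    (τ : ℝ → ℂ)
    (hτ : ∀ ν, τ ν = ∑ I : Finset (Fin M),
      (∏ i ∈ I, a i) * (∏ i ∈ I, ∏ j ∈ I, if i < j then c i j ν else 1) *
        ∏ i ∈ I, e i ν)
    (E : Fin M → ℂ)
    (hE : ∀ i, E i = Complex.exp ((hbar : ℂ)⁻¹ *
      ((Complex.log (p i 0) - Complex.log (q i 0)) * (s : ℂ) +
       (∑ k : Fin K, if ¬ (N ∣ (k.val + 1)) then
          (p i 0 ^ (k.val + 1) - q i 0 ^ (k.val + 1)) * (T k : ℂ) else 0) +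
       ∑ k : Fin K', ((k.val : ℂ) + 1) *
         (p i 0 ^ (k.val * N) * Complex.log (p i 0)
           - q i 0 ^ (k.val * N) * Complex.log (q i 0)) * (X k : ℂ))))
    (C : Fin M → Fin M → ℂ)
    (hC : ∀ i j, C i j =
      ((p i 0 - p j 0) * (q i 0 - q j 0)) / ((p i 0 - q j 0) * (q i 0 - p j 0))) :
    Tendsto τ (nhdsWithin (0 : ℝ) {0}ᶜ)
      (nhds (∑ I : Finset (Fin M),
        (∏ i ∈ I, a i) * (∏ i ∈ I, ∏ j ∈ I, if i < j then C i j else 1) *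
          ∏ i ∈ I, E i)) := by
  set l := nhdsWithin (0 : ℝ) {0}ᶜ with hl
  -- facts at ν = 0
  have hred0 : ∀ i, p i 0 ^ N = q i 0 ^ N := by
    intro i
    have h3 := ((hred i).self_of_nhds).2.2
    simpa using h3
  -- continuity of logs
  have hLp : ∀ i, ContinuousAt (fun ν => Complex.log (p i ν)) 0 :=
    fun i => (hp i).clog (hp0 i)
  have hLq : ∀ i, ContinuousAt (fun ν => Complex.log (q i ν)) 0 :=
    fun i => (hq i).clog (hq0 i)
  -- the limiting exponent function
  set F : Fin M → ℝ → ℂ := fun i ν => (hbar : ℂ)⁻¹ *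
      ((Complex.log (p i ν) - Complex.log (q i ν)) * (s : ℂ) +
       (∑ k : Fin K, if ¬ (N ∣ (k.val + 1)) then
          (p i ν ^ (k.val + 1) - q i ν ^ (k.val + 1)) * (T k : ℂ) else 0) +
       ∑ k : Fin K',
         ((∑ j ∈ Finset.range (k.val + 1),
             (p i ν ^ N) ^ j * (q i ν ^ N) ^ (k.val - j)) *
           (Complex.log (p i ν) - Complex.log (q i ν))) * (X k : ℂ)) with hF
  -- e agrees with exp ∘ F on the punctured neighborhood
  have e_eq : ∀ i, ∀ᶠ ν in l, e i ν = Complex.exp (F i ν) := by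
    intro i
    filter_upwards [(hred i).filter_mono nhdsWithin_le_nhds, self_mem_nhdsWithin]
      with ν hr hν
    have hν' : (ν : ℂ) ≠ 0 := by
      simp only [Set.mem_compl_iff, Set.mem_singleton_iff] at hν
      exact_mod_cast hν
    have hsub : p i ν ^ N - q i ν ^ N
        = (ν : ℂ) * (Complex.log (p i ν) - Complex.log (q i ν)) := by
      linear_combination hr.2.2
    have key : ∀ n : ℕ, (p i ν ^ ((n + 1) * N) - q i ν ^ ((n + 1) * N)) / (ν : ℂ)
        = (∑ j ∈ Finset.range (n + 1),
            (p i ν ^ N) ^ j * (q i ν ^ N) ^ (n - j)) *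
          (Complex.log (p i ν) - Complex.log (q i ν)) := by
      intro n
      have hgeom := geom_sum₂_mul (p i ν ^ N) (q i ν ^ N) (n + 1)
      simp only [Nat.add_sub_cancel] at hgeom
      rw [div_eq_iff hν', pow_mul', pow_mul']
      linear_combination (∑ j ∈ Finset.range (n + 1),
            (p i ν ^ N) ^ j * (q i ν ^ N) ^ (n - j)) * hsub - hgeom
    rw [he, hF]
    congr 2
    congr 1
    apply Finset.sum_congr rfl
    intro k _
    rw [mul_div_right_comm, key k.val]
  -- continuity of F i at 0
  have hFc : ∀ i, ContinuousAt (fun ν => F i ν) 0 := by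
    intro i
    simp only [hF]
    apply continuousAt_const.mul
    apply ContinuousAt.add
    apply ContinuousAt.add
    · exact ((hLp i).sub (hLq i)).mul continuousAt_const
    · apply tendsto_finset_sum
      intro k _
      by_cases hk : ¬ (N ∣ (k.val + 1))
      · simp only [if_pos hk]
        exact (((hp i).pow _).sub ((hq i).pow _)).mul continuousAt_const
      · simp only [if_neg hk]
        exact tendsto_const_nhds
    · apply tendsto_finset_sum
      intro k _
      apply ContinuousAt.mul ?_ continuousAt_const
      apply ContinuousAt.mul ?_ ((hLp i).sub (hLq i))
      apply tendsto_finset_sum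
      intro j _
      exact (((hp i).pow N).pow j).mul (((hq i).pow N).pow (k.val - j))
  -- exp (F i 0) = E i
  have hFE : ∀ i, Complex.exp (F i 0) = E i := by
    intro i
    rw [hE]
    simp only [hF]
    congr 2
    congr 1
    apply Finset.sum_congr rfl
    intro k _
    have hpq := hred0 i
    have hsum : (∑ j ∈ Finset.range (k.val + 1),
        (p i 0 ^ N) ^ j * (q i 0 ^ N) ^ (k.val - j))
        = ((k.val : ℂ) + 1) * (p i 0 ^ N) ^ k.val := by
      rw [← hpq]
      have hterm : ∀ j ∈ Finset.range (k.val + 1),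
          (p i 0 ^ N) ^ j * (p i 0 ^ N) ^ (k.val - j) = (p i 0 ^ N) ^ k.val := by
        intro j hj
        rw [← pow_add, Nat.add_sub_cancel' (Nat.lt_succ_iff.mp (Finset.mem_range.mp hj))]
      rw [Finset.sum_congr rfl hterm, Finset.sum_const, Finset.card_range, nsmul_eq_mul]
      push_cast
      ring
    rw [hsum, pow_mul' (p i 0) k.val N, pow_mul' (q i 0) k.val N, ← hpq]
    ring
  -- e i tends to E i
  have he_tend : ∀ i, Tendsto (e i) l (nhds (E i)) := by
    intro i
    have h1 : Tendsto (fun ν => Complex.exp (F i ν)) l (nhds (E i)) := by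
      rw [← hFE i]
      exact ((Complex.continuous_exp.continuousAt.comp (hFc i)).mono_left
        nhdsWithin_le_nhds)
    exact h1.congr' ((e_eq i).mono fun ν h => h.symm)
  -- c i j tends to C i j for i ≠ j
  have hc_tend : ∀ i j, i ≠ j → Tendsto (c i j) l (nhds (C i j)) := by
    intro i j hij
    have hden : (p i 0 - q j 0) * (q i 0 - p j 0) ≠ 0 :=
      mul_ne_zero (sub_ne_zero.mpr (hpq0 i j hij)) (sub_ne_zero.mpr (hqp0 i j hij))
    have hcont : ContinuousAt (fun ν => ((p i ν - p j ν) * (q i ν - q j ν)) /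
        ((p i ν - q j ν) * (q i ν - p j ν))) 0 :=
      ContinuousAt.div (((hp i).sub (hp j)).mul ((hq i).sub (hq j)))
        (((hp i).sub (hq j)).mul ((hq i).sub (hp j))) hden
    rw [hC]
    exact Tendsto.congr (fun ν => (hc i j ν).symm)
      (hcont.mono_left nhdsWithin_le_nhds)
  -- assemble
  refine Tendsto.congr (fun ν => (hτ ν).symm) ?_
  apply tendsto_finset_sum
  intro I _
  refine (tendsto_const_nhds.mul ?_).mul ?_
  · apply tendsto_finset_prod
    intro i _
    apply tendsto_finset_prod
    intro j _
    by_cases hij : i < j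
    · simp only [if_pos hij]
      exact hc_tend i j (ne_of_lt hij)
    · simp only [if_neg hij]
      exact tendsto_const_nhds
  · exact tendsto_finset_prod _ (fun i _ => he_tend i)
end

section
/- Let N, K, M be positive integers with N ≤ K, let ħ be a nonzero real number, and let a_1,…,a_M ∈ ℂ and nonzero p_1,…,p_M, q_1,…,q_M ∈ ℂ satisfy p_i ≠ q_j and q_i ≠ p_j for all i ≠ j, together with the N-reduction condition p_i^N = q_i^N for every i. For (s,t) ∈ ℝ × ℝ^K define e_i(s,t) = exp(ħ⁻¹((Log p_i − Log q_i)·s + Σ_{k=1}^K (p_i^k − q_i^k)·t_k)), c_{ij} = ((p_i−p_j)(q_i−q_j))/((p_i−q_j)(q_i−p_j)), and τ(s,t) = Σ_{I ⊆ {1,…,M}} (Π_{i∈I} a_i)·(Π_{i<j, i,j∈I} c_{ij})·Π_{i∈I} e_i(s,t). Then ∂τ/∂t_N(s,t) = 0 for all (s,t) ∈ ℝ × ℝ^K. -/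
/-- Under the N-reduction condition `p_i^N = q_i^N`, the
M-soliton tau function of the lattice KP hierarchy (time variables truncated
to `t_1, …, t_K`) has trivial `t_N`-flow: `∂τ/∂t_N = 0`. -/
theorem stmt_7 (N K M : ℕ) (hN : 0 < N) (hNK : N ≤ K) (hM : 0 < M)
    (hbar : ℝ) (hhbar : hbar ≠ 0)
    (a p q : Fin M → ℂ) (hp : ∀ i, p i ≠ 0) (hq : ∀ i, q i ≠ 0)
    (hpq : ∀ i j, i ≠ j → p i ≠ q j) (hqp : ∀ i j, i ≠ j → q i ≠ p j)
    (e : Fin M → ℝ → (Fin K → ℝ) → ℂ)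
    (he : ∀ i s t, e i s t = Complex.exp ((hbar : ℂ)⁻¹ *
      ((Complex.log (p i) - Complex.log (q i)) * (s : ℂ) +
        ∑ k : Fin K, (p i ^ (k.val + 1) - q i ^ (k.val + 1)) * (t k : ℂ))))
    (c : Fin M → Fin M → ℂ)
    (hc : ∀ i j, c i j =
      ((p i - p j) * (q i - q j)) / ((p i - q j) * (q i - p j)))
    (τ : ℝ → (Fin K → ℝ) → ℂ)
    (hτ : ∀ s t, τ s t = ∑ I : Finset (Fin M),
      (∏ i ∈ I, a i) * (∏ i ∈ I, ∏ j ∈ I, if i < j then c i j else 1) *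
        ∏ i ∈ I, e i s t)
    (hred : ∀ i, p i ^ N = q i ^ N) :
    ∀ (s : ℝ) (t : Fin K → ℝ),
      deriv (fun x : ℝ => τ s (Function.update t ⟨N - 1, by omega⟩ x))
        (t ⟨N - 1, by omega⟩) = 0 := by
  intro s t
  set n : Fin K := ⟨N - 1, by omega⟩ with hn
  have hnv : n.val + 1 = N := by simp [hn]; omega
  have hconst : ∀ x : ℝ, τ s (Function.update t n x) = τ s t := by
    intro x
    rw [hτ, hτ]
    refine Finset.sum_congr rfl fun I _ => ?_
    congr 1
    refine Finset.prod_congr rfl fun i _ => ?_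
    rw [he, he]
    congr 3
    refine Finset.sum_congr rfl fun k _ => ?_
    by_cases hk : k = n
    · subst hk
      rw [hnv, hred i]
      simp
    · rw [Function.update_of_ne hk]
  have : (fun x : ℝ => τ s (Function.update t n x)) = fun _ => τ s t :=
    funext hconst
  rw [this]
  exact deriv_const _ _
end
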